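/- arXiv:2404.03672 — 2 statements merged into one kernel-verified Lean document; each statement's English description precedes it below -/
import Mathlib

section
/- The Stefan-Dirichlet potential E(ξ̄) = -∑_{i=0}^{m} kᵢ(u_{i+1}-uᵢ) ln(F(ξᵢ/aᵢ) - F(ξ_{i+1}/aᵢ)) + ∑_{i=1}^{m} dᵢξᵢ²/4 is strictly convex on the open convex domain Ω = {ξ̄ ∈ ℝᵐ : ξ₁ > ⋯ > ξₘ > 0}. -/
noncomputable def F (ξ : ℝ) : ℝ :=
  (1 / Real.sqrt Real.pi) * ∫ s in (0:ℝ)..ξ, Real.exp (-s ^ 2 / 4)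

/-- Extension of `ξ = (ξ₁, …, ξₘ)` to indices `0, …, m+1`, with the convention
`ξ_{m+1} = 0` (the value at index `0` is irrelevant: there `F(ξ₀/a₀) = F(+∞) = 1`). -/
def ext (m : ℕ) (ξ : Fin m → ℝ) : ℕ → ℝ :=
  fun i => if h : 1 ≤ i ∧ i ≤ m then ξ ⟨i - 1, by omega⟩ else 0

/-- The Stefan–Dirichlet potential
`E(ξ̄) = -∑_{i=0}^m kᵢ(u_{i+1}-uᵢ) ln(F(ξᵢ/aᵢ) - F(ξ_{i+1}/aᵢ)) + ∑_{i=1}^m dᵢξᵢ²/4`,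
with conventions `F(ξ₀/a₀) = 1`, `ξ_{m+1} = 0` (so `F(ξ_{m+1}/aₘ) = 0`). -/
noncomputable def E (m : ℕ) (u k a d : ℕ → ℝ) (ξ : Fin m → ℝ) : ℝ :=
  (∑ i ∈ Finset.range (m + 1),
    -(k i * (u (i + 1) - u i) *
      Real.log ((if i = 0 then 1 else F (ext m ξ i / a i)) - F (ext m ξ (i + 1) / a i))))
  + ∑ i ∈ Finset.Icc 1 m, d i * (ext m ξ i) ^ 2 / 4

/-- The domain `Ω = {ξ₁ > ξ₂ > ⋯ > ξₘ > 0}`. -/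
def Omega (m : ℕ) : Set (Fin m → ℝ) := {ξ | StrictAnti ξ ∧ ∀ i, 0 < ξ i}

/-!
For `1 ≤ i ≤ m` the `i`-th logarithmic term of `E` is `kᵢ (uᵢ₊₁ - uᵢ) G (ξᵢ/aᵢ, ξᵢ₊₁/aᵢ)` with
`G (x, y) = -log (F x - F y)`. Restricted to a line, `G` has second derivative
`(h'² - h h'') / h²` with `h = F x - F y`, and `h'² - h h''` is a quadratic form in the direction
whose positive definiteness comes down to the Mills-ratio bound `z (1 - F z) ≤ 2 F'(z)`
(`∫_z^∞ e^{-s²/4} ds ≤ ∫_z^∞ (s/z) e^{-s²/4} ds`). So `G` is strictly convex on `y < x`.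
Since `ξ` can be read off the pairs `(ξᵢ/aᵢ, ξᵢ₊₁/aᵢ)`, the sum of these terms is strictly convex
on `Ω`, and the remaining terms, `-log (1 - F (ξ₁/a₀))` and the quadratic ones, are convex.
-/

open Real Set Filter MeasureTheory Topology

noncomputable def F' (z : ℝ) : ℝ := 1 / √π * exp (-z ^ 2 / 4)

lemma F'_pos (z : ℝ) : 0 < F' z := by unfold F'; positivity

lemma F'_neg (z : ℝ) : F' (-z) = F' z := by simp [F']

lemma hasDerivAt_neg_sq_div_four (z : ℝ) : HasDerivAt (fun s : ℝ => -s ^ 2 / 4) (-(z / 2)) z := by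
  simpa [neg_div] using ((hasDerivAt_pow 2 z).neg.div_const 4).congr_deriv (by ring)

lemma integrable_exp_neg_sq_div_four : Integrable fun s : ℝ => exp (-s ^ 2 / 4) := by
  simpa [neg_div, div_eq_inv_mul] using integrable_exp_neg_mul_sq (by norm_num : (0 : ℝ) < 4⁻¹)

lemma integrable_mul_exp_neg_sq_div_four : Integrable fun s : ℝ => s * exp (-s ^ 2 / 4) := by
  simpa [neg_div, div_eq_inv_mul] using
    integrable_mul_exp_neg_mul_sq (by norm_num : (0 : ℝ) < 4⁻¹)

lemma hasDerivAt_F (z : ℝ) : HasDerivAt F (F' z) z := by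
  have hcont : Continuous fun s : ℝ => exp (-s ^ 2 / 4) := by fun_prop
  exact (intervalIntegral.integral_hasDerivAt_right
    integrable_exp_neg_sq_div_four.intervalIntegrable
    hcont.aestronglyMeasurable.stronglyMeasurableAtFilter hcont.continuousAt).const_mul _

lemma hasDerivAt_F' (z : ℝ) : HasDerivAt F' (-(z / 2) * F' z) z :=
  ((hasDerivAt_neg_sq_div_four z).exp.const_mul (1 / √π)).congr_deriv (by unfold F'; ring)

lemma F_strictMono : StrictMono F :=
  strictMono_of_deriv_pos fun z => (hasDerivAt_F z).deriv ▸ F'_pos z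

lemma F_neg (z : ℝ) : F (-z) = -F z := by
  have h := intervalIntegral.integral_comp_neg (a := 0) (b := z) fun s => exp (-s ^ 2 / 4)
  simp only [neg_sq, neg_zero] at h
  rw [F, F, intervalIntegral.integral_symm (-z) 0, ← h, mul_neg]

lemma one_sub_F_eq_integral_Ioi (z : ℝ) :
    1 - F z = 1 / √π * ∫ s in Ioi z, exp (-s ^ 2 / 4) := by
  have hhalf : ∫ s in Ioi (0 : ℝ), exp (-s ^ 2 / 4) = √π := by
    have h := integral_gaussian_Ioi 4⁻¹
    rw [show π / 4⁻¹ = 2 ^ 2 * π by ring, sqrt_mul (by positivity), sqrt_sq zero_le_two] at h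
    simpa [neg_div, div_eq_inv_mul] using h
  rw [F, ← intervalIntegral.integral_Ioi_sub_Ioi' integrable_exp_neg_sq_div_four.integrableOn
    integrable_exp_neg_sq_div_four.integrableOn, hhalf]
  field_simp [(sqrt_pos.2 pi_pos).ne']
  ring

lemma F_lt_one (z : ℝ) : F z < 1 := by
  have hpos : 0 < ∫ s in Ioi z, exp (-s ^ 2 / 4) := by
    refine (setIntegral_pos_iff_support_of_nonneg_ae (.of_forall fun s => (exp_pos _).le)
      integrable_exp_neg_sq_div_four.integrableOn).2 ?_
    simp [Function.support, (exp_pos _).ne']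
  rw [← sub_pos, one_sub_F_eq_integral_Ioi]
  exact mul_pos (by positivity) hpos

lemma neg_one_lt_F (z : ℝ) : -1 < F z := by
  linarith [F_lt_one (-z), F_neg z]

lemma integral_Ioi_mul_exp_neg_sq_div_four (z : ℝ) :
    ∫ s in Ioi z, s * exp (-s ^ 2 / 4) = 2 * exp (-z ^ 2 / 4) := by
  have hderiv (x : ℝ) :
      HasDerivAt (fun s : ℝ => -2 * exp (-s ^ 2 / 4)) (x * exp (-x ^ 2 / 4)) x :=
    ((hasDerivAt_neg_sq_div_four x).exp.const_mul (-2)).congr_deriv (by ring)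
  have hlim : Tendsto (fun s : ℝ => -2 * exp (-s ^ 2 / 4)) atTop (𝓝 0) := by
    have h : Tendsto (fun s : ℝ => -s ^ 2 / 4) atTop atBot :=
      (tendsto_neg_atTop_atBot.comp ((tendsto_pow_atTop two_ne_zero).atTop_div_const
        (by norm_num : (0 : ℝ) < 4))).congr fun s => by simp [neg_div]
    simpa using (tendsto_exp_atBot.comp h).const_mul (-2)
  rw [integral_Ioi_of_hasDerivAt_of_tendsto' (fun x _ => hderiv x)
    integrable_mul_exp_neg_sq_div_four.integrableOn hlim]
  ring

lemma mul_one_sub_F_le (z : ℝ) : z * (1 - F z) ≤ 2 * F' z := by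
  have hmono : z * ∫ s in Ioi z, exp (-s ^ 2 / 4) ≤ 2 * exp (-z ^ 2 / 4) := by
    rw [← integral_const_mul, ← integral_Ioi_mul_exp_neg_sq_div_four]
    exact setIntegral_mono_on (integrable_exp_neg_sq_div_four.const_mul z).integrableOn
      integrable_mul_exp_neg_sq_div_four.integrableOn measurableSet_Ioi
      fun s hs => mul_le_mul_of_nonneg_right (le_of_lt hs) (exp_pos _).le
  calc z * (1 - F z) = 1 / √π * (z * ∫ s in Ioi z, exp (-s ^ 2 / 4)) := by
        rw [one_sub_F_eq_integral_Ioi]; ring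
    _ ≤ 1 / √π * (2 * exp (-z ^ 2 / 4)) := by gcongr
    _ = 2 * F' z := by unfold F'; ring

lemma neg_mul_one_add_F_le (z : ℝ) : -z * (1 + F z) ≤ 2 * F' z := by
  simpa [F_neg, F'_neg] using mul_one_sub_F_le (-z)

section
variable {X Y : ℝ}

lemma two_mul_F'_add_mul_F_sub_pos (h : Y < X) : 0 < 2 * F' X + X * (F X - F Y) := by
  rcases le_or_gt 0 X with hX | hX
  · nlinarith [F'_pos X, sub_pos.2 (F_strictMono h)]
  · linarith [neg_mul_one_add_F_le X,
      mul_pos (neg_pos.2 hX) (neg_lt_iff_pos_add'.1 (neg_one_lt_F Y))]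

lemma two_mul_F'_sub_mul_F_sub_pos (h : Y < X) : 0 < 2 * F' Y - Y * (F X - F Y) := by
  have := two_mul_F'_add_mul_F_sub_pos (neg_lt_neg h)
  simp only [F_neg, F'_neg] at this
  linarith

lemma mul_mul_F_sub_lt (h : Y < X) : X * Y * (F X - F Y) < 2 * (X * F' Y - Y * F' X) := by
  let κ t := 2 * (t * F' Y - Y * F' t) - t * Y * (F t - F Y)
  have hκ (t : ℝ) : HasDerivAt κ (2 * F' Y - Y * (F t - F Y)) t :=
    (((((hasDerivAt_id t).mul_const (F' Y)).sub ((hasDerivAt_F' t).const_mul Y)).const_mul 2).sub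
      (((hasDerivAt_id t).mul_const Y).mul ((hasDerivAt_F t).sub_const (F Y)))).congr_deriv
      (by simp only [id]; ring)
  have hmono : StrictMonoOn κ (Ici Y) := by
    refine strictMonoOn_of_deriv_pos (convex_Ici Y)
      (fun t _ => (hκ t).continuousAt.continuousWithinAt) fun t ht => ?_
    rw [interior_Ici] at ht
    exact (hκ t).deriv ▸ two_mul_F'_sub_mul_F_sub_pos ht
  have := hmono (mem_Ici.2 le_rfl) h.le h
  simp only [κ, sub_self, mul_zero] at this
  linarith

lemma quadratic_form_pos {p q r A B : ℝ} (hp : 0 < p) (hdet : r ^ 2 < p * q)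
    (hAB : A ≠ 0 ∨ B ≠ 0) : 0 < p * A ^ 2 - 2 * r * A * B + q * B ^ 2 := by
  have key : p * (p * A ^ 2 - 2 * r * A * B + q * B ^ 2)
      = (p * A - r * B) ^ 2 + (p * q - r ^ 2) * B ^ 2 := by
    ring
  refine pos_of_mul_pos_right (key ▸ ?_) hp.le
  rcases eq_or_ne B 0 with rfl | hB
  · have hA : A ≠ 0 := hAB.resolve_right (not_not.2 rfl)
    simpa using sq_pos_of_ne_zero (mul_ne_zero hp.ne' hA)
  · exact add_pos_of_nonneg_of_pos (sq_nonneg _) (mul_pos (sub_pos.2 hdet) (by positivity))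

lemma F_sub_mul_lt_sq {A B : ℝ} (h : Y < X) (hAB : A ≠ 0 ∨ B ≠ 0) :
    (F X - F Y) * (B ^ 2 * Y * F' Y - A ^ 2 * X * F' X) < 2 * (A * F' X - B * F' Y) ^ 2 := by
  have hG := sub_pos.2 (F_strictMono h)
  -- `(2F'X + XG)(2F'Y - YG) - 4 F'X F'Y = G (2 (X F'Y - Y F'X) - XYG)` with `G = F X - F Y`
  have hdet : (2 * F' X * F' Y) ^ 2 <
      (F' X * (2 * F' X + X * (F X - F Y))) * (F' Y * (2 * F' Y - Y * (F X - F Y))) := by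
    have := mul_pos (mul_pos (mul_pos (F'_pos X) (F'_pos Y)) hG) (sub_pos.2 (mul_mul_F_sub_lt h))
    nlinarith
  have := quadratic_form_pos (mul_pos (F'_pos X) (two_mul_F'_add_mul_F_sub_pos h)) hdet hAB
  nlinarith

end

section NegLog
variable {h h' h'' : ℝ → ℝ}

lemma hasDerivAt_deriv_neg_log {U : Set ℝ} (hU : IsOpen U) (hh : ∀ r, HasDerivAt h (h' r) r)
    (hh' : ∀ r, HasDerivAt h' (h'' r) r) (hpos : ∀ r ∈ U, 0 < h r) {r : ℝ} (hr : r ∈ U) :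
    HasDerivAt (deriv fun r => -log (h r)) ((h' r ^ 2 - h r * h'' r) / h r ^ 2) r := by
  have hderiv : deriv (fun r => -log (h r)) =ᶠ[𝓝 r] fun r => -(h' r / h r) :=
    eventually_of_mem (hU.mem_nhds hr) fun w hw => ((hh w).log (hpos w hw).ne').neg.deriv
  have hr' := (hpos r hr).ne'
  exact (((hh' r).div (hh r) hr').neg.congr_of_eventuallyEq hderiv).congr_deriv
    (by field_simp; ring)

lemma strictConvexOn_neg_log_of_mul_lt_sq {D : Set ℝ} (hD : Convex ℝ D)
    (hh : ∀ r, HasDerivAt h (h' r) r) (hh' : ∀ r, HasDerivAt h' (h'' r) r)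
    (hpos : ∀ r ∈ D, 0 < h r) (hlc : ∀ r ∈ interior D, h r * h'' r < h' r ^ 2) :
    StrictConvexOn ℝ D fun r => -log (h r) := by
  refine strictConvexOn_of_deriv2_pos hD
    (fun r hr => ((hh r).continuousAt.log (hpos r hr).ne').neg.continuousWithinAt) fun r hr => ?_
  have hr' := hpos r (interior_subset hr)
  rw [Function.iterate_succ_apply, Function.iterate_one, (hasDerivAt_deriv_neg_log isOpen_interior
    hh hh' (fun r hr => hpos r (interior_subset hr)) hr).deriv]
  exact div_pos (sub_pos.2 (hlc r hr)) (by positivity)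

lemma convexOn_neg_log_of_mul_le_sq {D : Set ℝ} (hD : Convex ℝ D)
    (hh : ∀ r, HasDerivAt h (h' r) r) (hh' : ∀ r, HasDerivAt h' (h'' r) r)
    (hpos : ∀ r ∈ D, 0 < h r) (hlc : ∀ r ∈ interior D, h r * h'' r ≤ h' r ^ 2) :
    ConvexOn ℝ D fun r => -log (h r) := by
  have hpos' : ∀ r ∈ interior D, 0 < h r := fun r hr => hpos r (interior_subset hr)
  refine convexOn_of_deriv2_nonneg hD
    (fun r hr => ((hh r).continuousAt.log (hpos r hr).ne').neg.continuousWithinAt)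
    (fun r hr => ((hh r).log (hpos' r hr).ne').neg.differentiableAt.differentiableWithinAt)
    (fun r hr => (hasDerivAt_deriv_neg_log isOpen_interior hh hh' hpos' hr).differentiableAt
      |>.differentiableWithinAt) fun r hr => ?_
  have hr' := hpos' r hr
  rw [Function.iterate_succ_apply, Function.iterate_one,
    (hasDerivAt_deriv_neg_log isOpen_interior hh hh' hpos' hr).deriv]
  exact div_nonneg (sub_nonneg.2 (hlc r hr)) (by positivity)

end NegLog

lemma strictConvexOn_of_strictConvexOn_Icc {V : Type*} [AddCommGroup V] [Module ℝ V] {s : Set V}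
    {f : V → ℝ} (hs : Convex ℝ s)
    (h : ∀ x ∈ s, ∀ y ∈ s, x ≠ y → StrictConvexOn ℝ (Icc (0 : ℝ) 1) fun r => f (x + r • (y - x))) :
    StrictConvexOn ℝ s f := by
  refine ⟨hs, fun x hx y hy hxy a b ha hb hab => ?_⟩
  have := (h x hx y hy hxy).2 (left_mem_Icc.2 zero_le_one) (right_mem_Icc.2 zero_le_one)
    zero_ne_one ha hb hab
  simp only [zero_smul, add_zero, one_smul, add_sub_cancel] at this
  convert this using 2
  obtain rfl := eq_sub_of_add_eq hab
  module

lemma hasDerivAt_add_mul (x A r : ℝ) : HasDerivAt (fun r => x + r * A) A r := by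
  simpa using ((hasDerivAt_id r).mul_const A).const_add x

theorem strictConvexOn_neg_log_F_sub :
    StrictConvexOn ℝ {p : ℝ × ℝ | p.2 < p.1} fun p => -log (F p.1 - F p.2) := by
  have hH : Convex ℝ {p : ℝ × ℝ | p.2 < p.1} := by
    simpa [sub_neg] using
      convex_halfSpace_lt (LinearMap.snd ℝ ℝ ℝ - LinearMap.fst ℝ ℝ ℝ).isLinear 0
  refine strictConvexOn_of_strictConvexOn_Icc hH fun p hp q hq hpq => ?_
  set A := q.1 - p.1
  set B := q.2 - p.2
  have hline (r : ℝ) (hr : r ∈ Icc (0 : ℝ) 1) : p.2 + r * B < p.1 + r * A := by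
    have := hH hp hq (sub_nonneg.2 hr.2) hr.1 (sub_add_cancel 1 r)
    simp only [mem_ofPred_eq, Prod.fst_add, Prod.snd_add, Prod.smul_fst, Prod.smul_snd,
      smul_eq_mul] at this
    linarith
  have hAB : A ≠ 0 ∨ B ≠ 0 := by
    by_contra! hAB
    exact hpq (Prod.ext (sub_eq_zero.1 hAB.1).symm (sub_eq_zero.1 hAB.2).symm)
  show StrictConvexOn ℝ (Icc 0 1) fun r => -log (F (p.1 + r * A) - F (p.2 + r * B))
  refine strictConvexOn_neg_log_of_mul_lt_sq (convex_Icc 0 1)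
    (h' := fun r => A * F' (p.1 + r * A) - B * F' (p.2 + r * B))
    (h'' := fun r => (B ^ 2 * (p.2 + r * B) * F' (p.2 + r * B)
      - A ^ 2 * (p.1 + r * A) * F' (p.1 + r * A)) / 2)
    (fun r => (((hasDerivAt_F _).comp r (hasDerivAt_add_mul _ _ r)).sub
      ((hasDerivAt_F _).comp r (hasDerivAt_add_mul _ _ r))).congr_deriv (by ring))
    (fun r => ((((hasDerivAt_F' _).comp r (hasDerivAt_add_mul _ _ r)).const_mul A).sub
      (((hasDerivAt_F' _).comp r (hasDerivAt_add_mul _ _ r)).const_mul B)).congr_deriv (by ring))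
    (fun r hr => sub_pos.2 (F_strictMono (hline r hr))) fun r hr => ?_
  have := F_sub_mul_lt_sq (hline r (interior_subset hr)) hAB
  linarith

lemma convexOn_neg_log_one_sub_F : ConvexOn ℝ univ fun z => -log (1 - F z) :=
  convexOn_neg_log_of_mul_le_sq convex_univ (h' := fun z => -F' z) (h'' := fun z => z / 2 * F' z)
    (fun z => (hasDerivAt_F z).const_sub 1) (fun z => (hasDerivAt_F' z).neg.congr_deriv (by ring))
    (fun z _ => sub_pos.2 (F_lt_one z)) fun z _ => by
      nlinarith [mul_le_mul_of_nonneg_left (mul_one_sub_F_le z) (F'_pos z).le]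

section Convexity
variable {V W : Type*} [AddCommGroup V] [Module ℝ V] [AddCommGroup W] [Module ℝ W]

lemma StrictConvexOn.comp_linearMap_of_injective {s : Set W} {f : W → ℝ}
    (hf : StrictConvexOn ℝ s f) (g : V →ₗ[ℝ] W) (hg : Function.Injective g) :
    StrictConvexOn ℝ (g ⁻¹' s) (f ∘ g) :=
  ⟨hf.1.linear_preimage g, fun x hx y hy hxy a b ha hb hab => by
    simpa only [Function.comp, map_add, map_smul] using
      hf.2 hx hy (hg.ne hxy) ha hb hab⟩

lemma StrictConvexOn.const_mul {s : Set V} {f : V → ℝ} (hf : StrictConvexOn ℝ s f) {c : ℝ}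
    (hc : 0 < c) : StrictConvexOn ℝ s fun x => c * f x :=
  ⟨hf.1, fun x hx y hy hxy a b ha hb hab => by
    have := mul_lt_mul_of_pos_left (hf.2 hx hy hxy ha hb hab) hc
    simp only [smul_eq_mul] at this ⊢
    linarith⟩

lemma convexOn_sum {ι : Type*} {t : Finset ι} {s : Set V} {f : ι → V → ℝ} (hs : Convex ℝ s)
    (hf : ∀ i ∈ t, ConvexOn ℝ s (f i)) : ConvexOn ℝ s fun x => ∑ i ∈ t, f i x :=
  ⟨hs, fun x hx y hy a b ha hb hab => by
    simp only [smul_eq_mul, Finset.mul_sum, ← Finset.sum_add_distrib]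
    exact Finset.sum_le_sum fun i hi => (hf i hi).2 hx hy ha hb hab⟩

lemma strictConvexOn_univ_pi_sum {ι : Type*} [Fintype ι] {G : ι → Type*}
    [∀ i, AddCommGroup (G i)] [∀ i, Module ℝ (G i)] {s : ∀ i, Set (G i)} {f : ∀ i, G i → ℝ}
    (hf : ∀ i, StrictConvexOn ℝ (s i) (f i)) :
    StrictConvexOn ℝ (univ.pi s) fun x => ∑ i, f i (x i) := by
  refine ⟨convex_pi fun i _ => (hf i).1, fun x hx y hy hxy a b ha hb hab => ?_⟩
  obtain ⟨i, hi⟩ := Function.ne_iff.1 hxy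
  simp only [smul_eq_mul, Finset.mul_sum, ← Finset.sum_add_distrib]
  refine Finset.sum_lt_sum (fun j _ => (hf j).convexOn.2 (hx j trivial) (hy j trivial)
    ha.le hb.le hab) ⟨i, Finset.mem_univ i, (hf i).2 (hx i trivial) (hy i trivial) hi ha hb hab⟩

end Convexity

lemma convex_Omega (m : ℕ) : Convex ℝ (Omega m) := by
  refine convex_iff_forall_pos.2 fun p hp q hq a b ha hb _ => ⟨fun i j hij => ?_, fun i => ?_⟩
  · simpa using add_lt_add (mul_lt_mul_of_pos_left (hp.1 hij) ha)
      (mul_lt_mul_of_pos_left (hq.1 hij) hb)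
  · simpa using add_pos (mul_pos ha (hp.2 i)) (mul_pos hb (hq.2 i))

section Potential
variable {m : ℕ}

def extₗ (m i : ℕ) : (Fin m → ℝ) →ₗ[ℝ] ℝ :=
  if h : 1 ≤ i ∧ i ≤ m then LinearMap.proj ⟨i - 1, by omega⟩ else 0

lemma extₗ_apply (i : ℕ) (ξ : Fin m → ℝ) : extₗ m i ξ = ext m ξ i := by
  unfold extₗ _root_.ext
  split_ifs <;> rfl

lemma ext_succ (ξ : Fin m → ℝ) (j : Fin m) : ext m ξ (j + 1) = ξ j := by
  simp [_root_.ext]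

lemma ext_succ_succ_lt {ξ : Fin m → ℝ} (hξ : ξ ∈ Omega m) (j : Fin m) :
    ext m ξ (j + 1 + 1) < ext m ξ (j + 1) := by
  rw [ext_succ]
  by_cases hj : (j : ℕ) + 1 < m
  · exact (ext_succ ξ ⟨j + 1, hj⟩).symm ▸ hξ.1 (Fin.mk_lt_mk.2 (Nat.lt_add_one j))
  · simpa [_root_.ext, show ¬ (j : ℕ) + 1 + 1 ≤ m by omega] using hξ.2 j

noncomputable def pairMap (m : ℕ) (a : ℕ → ℝ) : (Fin m → ℝ) →ₗ[ℝ] Fin m → ℝ × ℝ :=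
  LinearMap.pi fun j => (a (j + 1))⁻¹ • (extₗ m (j + 1)).prod (extₗ m (j + 1 + 1))

lemma pairMap_apply (a : ℕ → ℝ) (ξ : Fin m → ℝ) (j : Fin m) :
    pairMap m a ξ j = (ext m ξ (j + 1) / a (j + 1), ext m ξ (j + 1 + 1) / a (j + 1)) := by
  simp [pairMap, extₗ_apply, div_eq_inv_mul]

lemma pairMap_injective {a : ℕ → ℝ} (ha : ∀ j : Fin m, a (j + 1) ≠ 0) :
    Function.Injective (pairMap m a) := fun ξ η h => funext fun j => by
  simpa [pairMap_apply, ext_succ, ha j] using congrArg (fun z => (z j).1) h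

lemma Omega_subset_preimage_pairMap {a : ℕ → ℝ} (ha : ∀ j : Fin m, 0 < a (j + 1)) :
    Omega m ⊆ pairMap m a ⁻¹' univ.pi fun _ => {p | p.2 < p.1} := fun ξ hξ j _ => by
  simpa [pairMap_apply] using div_lt_div_of_pos_right (ext_succ_succ_lt hξ j) (ha j)

end Potential

theorem E_strictConvexOn_general (m : ℕ) (u k a d : ℕ → ℝ)
    (hk : ∀ i ≤ m, 0 < k i) (ha : ∀ i ≤ m, 0 < a i)
    (hd : ∀ i, 1 ≤ i → i ≤ m → 0 ≤ d i)
    (hu0 : u 0 ≤ u 1) (hu : ∀ i, 1 ≤ i → i ≤ m → u i < u (i + 1)) :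
    StrictConvexOn ℝ (Omega m) (E m u k a d) := by
  have ha' (j : Fin m) : 0 < a (j + 1) := ha _ j.isLt
  have hc (j : Fin m) : 0 < k (j + 1) * (u (j + 1 + 1) - u (j + 1)) :=
    mul_pos (hk _ j.isLt) (sub_pos.2 (hu _ (Nat.le_add_left 1 j) j.isLt))
  have hfirst : ConvexOn ℝ (Omega m) fun ξ =>
      (k 0 * (u 1 - u 0)) • -log (1 - F (((a 0)⁻¹ • extₗ m 1) ξ)) :=
    ((convexOn_neg_log_one_sub_F.comp_linearMap _).smul (mul_nonneg (hk 0 m.zero_le).le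
      (sub_nonneg.2 hu0))).subset (subset_univ _) (convex_Omega m)
  have hpairs : StrictConvexOn ℝ (Omega m) fun ξ => ∑ j : Fin m,
      k (j + 1) * (u (j + 1 + 1) - u (j + 1)) *
        -log (F (pairMap m a ξ j).1 - F (pairMap m a ξ j).2) :=
    ((strictConvexOn_univ_pi_sum fun j => strictConvexOn_neg_log_F_sub.const_mul (hc j)
      ).comp_linearMap_of_injective _ (pairMap_injective fun j => (ha' j).ne')).subset
      (Omega_subset_preimage_pairMap ha') (convex_Omega m)
  have hquad : ConvexOn ℝ (Omega m) fun ξ => ∑ i ∈ Finset.Icc 1 m, (d i / 4) • extₗ m i ξ ^ 2 :=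
    (convexOn_sum convex_univ fun i hi => ((even_two.convexOn_pow (𝕜 := ℝ)).comp_linearMap _).smul
      (div_nonneg (hd i (Finset.mem_Icc.1 hi).1 (Finset.mem_Icc.1 hi).2) zero_le_four)).subset
      (subset_univ _) (convex_Omega m)
  refine ((hfirst.add_strictConvexOn hpairs).add_convexOn hquad).congr fun ξ _ => ?_
  simp [E, Finset.sum_range_succ', Finset.sum_range, extₗ_apply, pairMap_apply, div_eq_inv_mul,
    mul_assoc]

theorem E_strictConvexOn (m : ℕ) (hm : 1 ≤ m) (u k a d : ℕ → ℝ)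
    (hk : ∀ i ≤ m, 0 < k i) (ha : ∀ i ≤ m, 0 < a i)
    (hd : ∀ i, 1 ≤ i → i ≤ m → 0 ≤ d i)
    (hu0 : u 0 ≤ u 1) (hu : ∀ i, 1 ≤ i → i ≤ m → u i < u (i + 1))
    (hd1 : u 0 = u 1 → 0 < d 1) :
    StrictConvexOn ℝ (Omega m) (E m u k a d) :=
  E_strictConvexOn_general m u k a d hk ha hd hu0 hu
end

section
/- The function u(ξ) = u₀ + a₀ b_N √π (F(ξ/a₀) - 1) satisfies u'(0) = b_N, lim_{ξ→+∞} u(ξ) = u₀, u(0) = u₀ - a₀ b_N √π, and solves a² u'' = -(ξ/2) u' on (0, ∞) with a = a₀. -/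
/-! `F` is the error function rescaled so that `F 0 = 0` and `F ξ → 1`; hence
`v ξ = u₀ + a₀ bN √π (F (ξ / a₀) - 1)` has derivative `bN · exp (-(ξ / a₀)² / 4)`, a Gaussian,
which solves `a₀² g' = -(ξ / 2) g`. -/

open Real Filter Topology MeasureTheory

lemma hasDerivAt_F_s17 (x : ℝ) : HasDerivAt F (1 / √π * exp (-x ^ 2 / 4)) x := by
  have hcont : Continuous fun s : ℝ => exp (-s ^ 2 / 4) := by fun_prop
  exact (intervalIntegral.integral_hasDerivAt_right (hcont.intervalIntegrable 0 x)
    (hcont.stronglyMeasurableAtFilter _ _) hcont.continuousAt).const_mul _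

lemma F_zero : F 0 = 0 := by
  simp [F]

lemma integral_exp_neg_sq_div_four_Ioi : ∫ s in Set.Ioi (0:ℝ), exp (-s ^ 2 / 4) = √π := by
  have hgauss := integral_gaussian_Ioi (1 / 4)
  simp only [neg_mul, div_div_eq_mul_div, div_one] at hgauss
  rw [show π * 4 = 2 ^ 2 * π by ring, sqrt_mul (by positivity), sqrt_sq zero_le_two] at hgauss
  calc ∫ s in Set.Ioi (0:ℝ), exp (-s ^ 2 / 4)
      = ∫ s in Set.Ioi (0:ℝ), exp (-(1 / 4 * s ^ 2)) := by congr 1; ext s; ring_nf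
    _ = √π := by rw [hgauss]; ring

lemma tendsto_F_atTop : Tendsto F atTop (𝓝 1) := by
  have hint : IntegrableOn (fun s : ℝ => exp (-s ^ 2 / 4)) (Set.Ioi 0) := by
    have := (integrable_exp_neg_mul_sq (by norm_num : (0:ℝ) < 1 / 4)).integrableOn
      (s := Set.Ioi 0)
    convert this using 2 with s
    ring_nf
  have hlim := (intervalIntegral_tendsto_integral_Ioi 0 hint tendsto_id).const_mul (1 / √π)
  rw [integral_exp_neg_sq_div_four_Ioi, one_div_mul_cancel (by positivity)] at hlim
  exact hlim

lemma hasDerivAt_F_div (a x : ℝ) :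
    HasDerivAt (fun ξ => F (ξ / a)) (1 / √π * exp (-(x / a) ^ 2 / 4) * (1 / a)) x :=
  (hasDerivAt_F_s17 (x / a)).comp (h := fun ξ => ξ / a) x
    (by simpa using (hasDerivAt_id x).div_const a)

lemma hasDerivAt_gaussian (a b x : ℝ) :
    HasDerivAt (fun ξ => b * exp (-(ξ / a) ^ 2 / 4))
      (-(x / (2 * a ^ 2)) * (b * exp (-(x / a) ^ 2 / 4))) x := by
  have hinner : HasDerivAt (fun ξ : ℝ => -(ξ / a) ^ 2 / 4) (-(x / (2 * a ^ 2))) x := by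
    refine ((((hasDerivAt_id x).div_const a).pow 2).neg.div_const 4).congr_deriv ?_
    simp only [id]
    ring
  exact (hinner.exp.const_mul b).congr_deriv (by ring)

theorem type_zero_solution_general (a₀ bN u₀ : ℝ) (ha : 0 < a₀) :
    let v : ℝ → ℝ := fun ξ => u₀ + a₀ * bN * Real.sqrt Real.pi * (F (ξ / a₀) - 1)
    deriv v 0 = bN ∧
    Filter.Tendsto v Filter.atTop (nhds u₀) ∧
    v 0 = u₀ - a₀ * bN * Real.sqrt Real.pi ∧
    ∀ ξ ∈ Set.Ioi (0:ℝ), a₀ ^ 2 * deriv (deriv v) ξ = -(ξ / 2) * deriv v ξ := by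
  intro v
  have hderiv : deriv v = fun x => bN * exp (-(x / a₀) ^ 2 / 4) := by
    funext x
    refine ((((hasDerivAt_F_div a₀ x).sub_const 1).const_mul _).const_add u₀).deriv.trans ?_
    field_simp
  have hlim : Tendsto (fun ξ => F (ξ / a₀)) atTop (𝓝 1) :=
    tendsto_F_atTop.comp (tendsto_id.atTop_div_const ha)
  refine ⟨by simp [hderiv], ?_, by simp [v, F_zero]; ring, fun ξ _ => ?_⟩
  · simpa using ((hlim.sub_const 1).const_mul (a₀ * bN * √π)).const_add u₀
  · rw [hderiv, (hasDerivAt_gaussian a₀ bN ξ).deriv]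
    field_simp

theorem type_zero_solution (a₀ bN u₀ : ℝ) (ha : 0 < a₀) (hb : bN < 0) :
    let v : ℝ → ℝ := fun ξ => u₀ + a₀ * bN * Real.sqrt Real.pi * (F (ξ / a₀) - 1)
    deriv v 0 = bN ∧
    Filter.Tendsto v Filter.atTop (nhds u₀) ∧
    v 0 = u₀ - a₀ * bN * Real.sqrt Real.pi ∧
    ∀ ξ ∈ Set.Ioi (0:ℝ), a₀ ^ 2 * deriv (deriv v) ξ = -(ξ / 2) * deriv v ξ :=
  type_zero_solution_general a₀ bN u₀ ha
end
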